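/- Let Q : ℝ² → ℝ be a Schwartz function satisfying ΔQ − Q + Q³ = 0 on ℝ². Then ∫_{ℝ²} |∇Q(y)|² dy = (1/2) ∫_{ℝ²} Q(y)⁴ dy; equivalently, the energy E(Q) = ∫|∇Q|² − (1/2)∫Q⁴ of the ground state vanishes. -/

import Mathlib

/-! Testing the equation against `Q` gives the Nehari identity `∫ |∇Q|² = ∫ Q⁴ - ∫ Q²`. Testing it
against the dilation generator `y · ∇Q` and integrating by parts gives the Pohozaev identity
`(n/2 - 1) ∫ |∇Q|² = n (∫ Q⁴ / 4 - ∫ Q² / 2)` in dimension `n`. For `n = 2` its left side vanishes,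
so `∫ Q² = ∫ Q⁴ / 2`, and the Nehari identity turns this into `∫ |∇Q|² = ∫ Q⁴ / 2`. -/

open MeasureTheory

noncomputable section

abbrev E2 := EuclideanSpace ℝ (Fin 2)

/-- The partial derivative `∂f/∂yᵢ` of a function on `ℝ²`. -/
def pd (i : Fin 2) (f : E2 → ℝ) (y : E2) : ℝ :=
  fderiv ℝ f y (EuclideanSpace.single i 1)

/-- The Laplacian on `ℝ²`. -/
def lap (f : E2 → ℝ) (y : E2) : ℝ :=
  ∑ i, pd i (pd i f) y

open SchwartzMap LineDeriv Laplacian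
open scoped RealInnerProductSpace

namespace SchwartzMap

section NormedSpace

variable {E F : Type*} [NormedAddCommGroup E] [NormedSpace ℝ E]
  [NormedAddCommGroup F] [NormedSpace ℝ F]

theorem lineDerivOp_comm (f : 𝓢(E, F)) (v w : E) : ∂_{v} (∂_{w} f) = ∂_{w} (∂_{v} f) := by
  have hD : Differentiable ℝ (fderiv ℝ (f : E → F)) :=
    ((f.smooth ⊤).fderiv_right (m := 1) (WithTop.coe_le_coe.mpr le_top)).differentiable one_ne_zero
  have h2 : ∀ a b x : E, ∂_{a} (∂_{b} f) x = fderiv ℝ (fderiv ℝ (f : E → F)) x a b := by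
    intro a b x
    rw [lineDerivOp_apply_eq_fderiv, show ⇑(∂_{b} f : 𝓢(E, F)) = fun y => fderiv ℝ f y b from
      funext fun y => lineDerivOp_apply_eq_fderiv b f y,
      fderiv_clm_apply (hD x) (differentiableAt_const b)]
    simp
  ext x
  rw [h2, h2, ((f.smooth 2).contDiffAt).isSymmSndFDerivAt (by simp)]

theorem lineDerivOp_smulLeftCLM_clm_apply (ℓ : E →L[ℝ] ℝ) (f : 𝓢(E, F)) (v x : E) :
    ∂_{v} (smulLeftCLM F ⇑ℓ f) x = ℓ v • f x + ℓ x • ∂_{v} f x := by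
  have hℓ := ℓ.hasTemperateGrowth
  rw [lineDerivOp_apply_eq_fderiv, smulLeftCLM_apply hℓ, fderiv_fun_smul ℓ.differentiableAt
    f.differentiableAt, lineDerivOp_apply_eq_fderiv]
  simp [add_comm]

variable [FiniteDimensional ℝ E] [MeasurableSpace E] [BorelSpace E]
  {μ : Measure E} [μ.IsAddHaarMeasure]

theorem integrable_clm_smul (ℓ : E →L[ℝ] ℝ) (f : 𝓢(E, F)) :
    Integrable (fun x => ℓ x • f x) μ := by
  simpa [smulLeftCLM_apply ℓ.hasTemperateGrowth] using integrable (μ := μ) (smulLeftCLM F ⇑ℓ f)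

theorem integrable_mul (f g : 𝓢(E, ℝ)) : Integrable (fun x => f x * g x) μ :=
  integrable (pairing (ContinuousLinearMap.mul ℝ ℝ) f g)

theorem integrable_apply_pow_mul (f g : 𝓢(E, ℝ)) (k : ℕ) :
    Integrable (fun x => f x ^ k * g x) μ := by
  simpa [smulLeftCLM_apply (f.hasTemperateGrowth.pow k)] using
    integrable (μ := μ) (smulLeftCLM ℝ (⇑f ^ k) g)

theorem integrable_clm_mul_pow_mul (ℓ : E →L[ℝ] ℝ) (f g : 𝓢(E, ℝ)) (k : ℕ) :
    Integrable (fun x => ℓ x * (f x ^ k * g x)) μ := by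
  simpa [smulLeftCLM_apply (f.hasTemperateGrowth.pow k)] using
    integrable_clm_smul (μ := μ) ℓ (smulLeftCLM ℝ (⇑f ^ k) g)

theorem integral_clm_mul_lineDerivOp (ℓ : E →L[ℝ] ℝ) (f : 𝓢(E, ℝ)) (v : E) :
    ∫ x, ℓ x * ∂_{v} f x ∂μ = -(ℓ v * ∫ x, f x ∂μ) := by
  simp only [lineDerivOp_apply_eq_fderiv]
  rw [integral_mul_fderiv_eq_neg_fderiv_mul_of_integrable, ← integral_const_mul]
  · simp
  · simpa using f.integrable.const_mul (ℓ v)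
  · simpa [lineDerivOp_apply_eq_fderiv] using integrable_clm_smul (μ := μ) ℓ (∂_{v} f)
  · simpa using integrable_clm_smul (μ := μ) ℓ f
  · exact fun x _ => ℓ.differentiableAt
  · exact fun x _ => f.differentiableAt

theorem integral_clm_mul_pow_mul_lineDerivOp (ℓ : E →L[ℝ] ℝ) (f : 𝓢(E, ℝ)) (v : E) (k : ℕ) :
    ∫ x, ℓ x * (f x ^ k * ∂_{v} f x) ∂μ = -(ℓ v / (k + 1) * ∫ x, f x ^ (k + 1) ∂μ) := by
  set g := smulLeftCLM ℝ (⇑f ^ k) f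
  have hg : ⇑g = fun x => f x ^ (k + 1) := by
    ext x; simp [g, smulLeftCLM_apply (f.hasTemperateGrowth.pow k), pow_succ]
  have hg' : ∀ x, ∂_{v} g x = (k + 1) * (f x ^ k * ∂_{v} f x) := by
    intro x
    rw [lineDerivOp_apply_eq_fderiv, hg, fderiv_fun_pow _ f.differentiableAt,
      lineDerivOp_apply_eq_fderiv]
    simp only [add_tsub_cancel_right, nsmul_eq_mul, Nat.cast_add, Nat.cast_one, smul_apply,
      smul_eq_mul]
    ring
  have key := integral_clm_mul_lineDerivOp (μ := μ) ℓ g v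
  simp only [hg', mul_left_comm (ℓ _) ((k : ℝ) + 1), integral_const_mul, hg] at key
  have hk : (k : ℝ) + 1 ≠ 0 := by positivity
  rw [div_mul_eq_mul_div, ← neg_div, eq_div_iff hk]
  linarith

theorem integral_clm_mul_lineDerivOp_mul_lineDerivOp_lineDerivOp (ℓ : E →L[ℝ] ℝ) (f : 𝓢(E, ℝ))
    (v w : E) :
    ∫ x, ℓ x * ∂_{w} f x * ∂_{v} (∂_{v} f) x ∂μ
      = -(ℓ v * ∫ x, ∂_{w} f x * ∂_{v} f x ∂μ) + ℓ w / 2 * ∫ x, ∂_{v} f x ^ 2 ∂μ := by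
  have ibp := integral_mul_lineDerivOp_right_eq_neg_left (μ := μ)
    (smulLeftCLM ℝ ⇑ℓ (∂_{w} f)) (∂_{v} f) v
  have half := integral_clm_mul_pow_mul_lineDerivOp (μ := μ) ℓ (∂_{v} f) w 1
  simp only [pow_one, Nat.cast_one, one_add_one_eq_two] at half
  simp only [lineDerivOp_smulLeftCLM_clm_apply, smulLeftCLM_apply_apply ℓ.hasTemperateGrowth,
    smul_eq_mul, add_mul, lineDerivOp_comm f v w] at ibp
  have e1 : ∫ x, ℓ v * ∂_{w} f x * ∂_{v} f x ∂μ = ℓ v * ∫ x, ∂_{w} f x * ∂_{v} f x ∂μ := by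
    simp_rw [mul_assoc]; exact integral_const_mul _ _
  have e2 : ∫ x, ℓ x * ∂_{w} (∂_{v} f) x * ∂_{v} f x ∂μ
      = ∫ x, ℓ x * (∂_{v} f x * ∂_{w} (∂_{v} f) x) ∂μ := by
    congr 1; ext x; ring
  have i1 : Integrable (fun x => ℓ v * ∂_{w} f x * ∂_{v} f x) μ := by
    simpa only [mul_assoc] using (integrable_mul (μ := μ) (∂_{w} f) (∂_{v} f)).const_mul (ℓ v)
  have i2 : Integrable (fun x => ℓ x * ∂_{w} (∂_{v} f) x * ∂_{v} f x) μ := by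
    refine (integrable_clm_mul_pow_mul (μ := μ) ℓ (∂_{v} f) (∂_{w} (∂_{v} f)) 1).congr
      (.of_forall fun x => ?_)
    ring
  rw [integral_add i1 i2, e1, e2, half] at ibp
  rw [ibp]
  ring

end NormedSpace

section InnerProductSpace

variable {E ι : Type*} [NormedAddCommGroup E] [InnerProductSpace ℝ E] [FiniteDimensional ℝ E]
  [MeasurableSpace E] [BorelSpace E] {μ : Measure E} [μ.IsAddHaarMeasure] [Fintype ι]

theorem integral_mul_laplacian (b : OrthonormalBasis ι ℝ E) (f : 𝓢(E, ℝ)) :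
    ∫ x, f x * Δ f x ∂μ = -∑ i, ∫ x, ∂_{b i} f x ^ 2 ∂μ := by
  simp only [laplacian_eq_sum b, sum_apply, Finset.mul_sum]
  rw [integral_finsetSum _ fun i _ => integrable_mul f (∂_{b i} (∂_{b i} f))]
  simp [integral_mul_lineDerivOp_right_eq_neg_left, sq, ← Finset.sum_neg_distrib]

theorem sum_integral_inner_mul_lineDerivOp_mul_laplacian (b : OrthonormalBasis ι ℝ E)
    (f : 𝓢(E, ℝ)) :
    ∑ j, ∫ x, ⟪b j, x⟫ * ∂_{b j} f x * Δ f x ∂μ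
      = (Fintype.card ι / 2 - 1) * ∑ i, ∫ x, ∂_{b i} f x ^ 2 ∂μ := by
  classical
  have hterm : ∀ i j, ∫ x, ⟪b j, x⟫ * ∂_{b j} f x * ∂_{b i} (∂_{b i} f) x ∂μ
      = -(if j = i then ∫ x, ∂_{b i} f x ^ 2 ∂μ else 0) + 1 / 2 * ∫ x, ∂_{b i} f x ^ 2 ∂μ := by
    intro i j
    have h := integral_clm_mul_lineDerivOp_mul_lineDerivOp_lineDerivOp (μ := μ)
      (innerSL ℝ (b j)) f (b i) (b j)
    simp only [innerSL_apply_apply, b.inner_eq_ite] at h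
    rw [h]
    split_ifs with hji
    · subst hji; simp [sq]
    · simp
  have hj : ∀ j, ∫ x, ⟪b j, x⟫ * ∂_{b j} f x * Δ f x ∂μ
      = ∑ i, ∫ x, ⟪b j, x⟫ * ∂_{b j} f x * ∂_{b i} (∂_{b i} f) x ∂μ := by
    intro j
    simp only [laplacian_eq_sum b, sum_apply, Finset.mul_sum]
    refine integral_finsetSum _ fun i _ => ?_
    simpa [mul_assoc] using
      integrable_clm_mul_pow_mul (μ := μ) (innerSL ℝ (b j)) (∂_{b j} f) (∂_{b i} (∂_{b i} f)) 1
  simp only [hj, hterm, Finset.sum_add_distrib, Finset.sum_neg_distrib, Finset.sum_ite_eq,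
    Finset.mem_univ, if_true, ← Finset.mul_sum, Finset.sum_const, Finset.card_univ, nsmul_eq_mul]
  ring

theorem sum_integral_sq_lineDerivOp_of_laplacian_eq (b : OrthonormalBasis ι ℝ E) {Q : 𝓢(E, ℝ)}
    (hQ : ∀ x, Δ Q x = Q x - Q x ^ 3) :
    ∑ i, ∫ x, ∂_{b i} Q x ^ 2 ∂μ = ∫ x, Q x ^ 4 ∂μ - ∫ x, Q x ^ 2 ∂μ := by
  have h := integral_mul_laplacian (μ := μ) b Q
  rw [show (fun x => Q x * Δ Q x) = fun x => Q x ^ 1 * Q x - Q x ^ 3 * Q x from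
      funext fun x => by rw [hQ]; ring,
    integral_sub (integrable_apply_pow_mul Q Q 1) (integrable_apply_pow_mul Q Q 3)] at h
  simp only [← pow_succ] at h
  linarith

theorem pohozaev_of_laplacian_eq (b : OrthonormalBasis ι ℝ E) {Q : 𝓢(E, ℝ)}
    (hQ : ∀ x, Δ Q x = Q x - Q x ^ 3) :
    (Fintype.card ι / 2 - 1) * ∑ i, ∫ x, ∂_{b i} Q x ^ 2 ∂μ
      = Fintype.card ι * ((∫ x, Q x ^ 4 ∂μ) / 4 - (∫ x, Q x ^ 2 ∂μ) / 2) := by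
  rw [← sum_integral_inner_mul_lineDerivOp_mul_laplacian b Q]
  have hj : ∀ j, ∫ x, ⟪b j, x⟫ * ∂_{b j} Q x * Δ Q x ∂μ
      = (∫ x, Q x ^ 4 ∂μ) / 4 - (∫ x, Q x ^ 2 ∂μ) / 2 := by
    intro j
    have h1 := integral_clm_mul_pow_mul_lineDerivOp (μ := μ) (innerSL ℝ (b j)) Q (b j) 1
    have h3 := integral_clm_mul_pow_mul_lineDerivOp (μ := μ) (innerSL ℝ (b j)) Q (b j) 3
    norm_num [b.norm_eq_one] at h1 h3
    have i1 : Integrable (fun x => ⟪b j, x⟫ * (Q x * ∂_{b j} Q x)) μ := by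
      simpa only [pow_one, innerSL_apply_apply] using
        integrable_clm_mul_pow_mul (μ := μ) (innerSL ℝ (b j)) Q _ 1
    have i3 : Integrable (fun x => ⟪b j, x⟫ * (Q x ^ 3 * ∂_{b j} Q x)) μ :=
      integrable_clm_mul_pow_mul (innerSL ℝ (b j)) Q _ 3
    rw [show (fun x => ⟪b j, x⟫ * ∂_{b j} Q x * Δ Q x)
        = fun x => ⟪b j, x⟫ * (Q x * ∂_{b j} Q x) - ⟪b j, x⟫ * (Q x ^ 3 * ∂_{b j} Q x) from
        funext fun x => by rw [hQ]; ring,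
      integral_sub i1 i3, h1, h3]
    ring
  simp only [hj, Finset.sum_const, Finset.card_univ, nsmul_eq_mul]

end InnerProductSpace

end SchwartzMap

theorem pd_eq_lineDerivOp (f : 𝓢(E2, ℝ)) (i : Fin 2) :
    pd i ⇑f = ⇑(∂_{EuclideanSpace.basisFun (Fin 2) ℝ i} f : 𝓢(E2, ℝ)) := by
  ext y
  rw [pd, lineDerivOp_apply_eq_fderiv, EuclideanSpace.basisFun_apply]

theorem lap_eq_laplacian (f : 𝓢(E2, ℝ)) : lap ⇑f = ⇑(Δ f : 𝓢(E2, ℝ)) := by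
  ext y
  simp only [lap, pd_eq_lineDerivOp, laplacian_eq_sum (EuclideanSpace.basisFun (Fin 2) ℝ),
    sum_apply]

/-- A Schwartz solution `Q` of `ΔQ - Q + Q³ = 0` on `ℝ²` has vanishing energy:
`∫ |∇Q|² = (1/2) ∫ Q⁴`. -/
theorem ground_state_zero_energy (Q : SchwartzMap E2 ℝ)
    (heq : ∀ y : E2, lap (⇑Q) y - Q y + (Q y) ^ 3 = 0) :
    (∫ y : E2, ∑ i, (pd i (⇑Q) y) ^ 2) = (1 / 2) * ∫ y : E2, (Q y) ^ 4 := by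
  set b := EuclideanSpace.basisFun (Fin 2) ℝ
  have hQ : ∀ y, Δ Q y = Q y - Q y ^ 3 := fun y => by
    rw [← lap_eq_laplacian]; linarith [heq y]
  have hgrad : ∫ y, ∑ i, pd i (⇑Q) y ^ 2 = ∑ i, ∫ y, ∂_{b i} Q y ^ 2 := by
    simp only [pd_eq_lineDerivOp]
    exact integral_finsetSum _ fun i _ => by
      simpa only [sq] using integrable_mul (μ := volume) (∂_{b i} Q) (∂_{b i} Q)
  have nehari := sum_integral_sq_lineDerivOp_of_laplacian_eq (μ := volume) b hQ
  have pohozaev := pohozaev_of_laplacian_eq (μ := volume) b hQ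
  rw [Fintype.card_fin] at pohozaev
  norm_num at pohozaev
  linarith
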